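/- Let D₁ and D₂ be distributions on {0,1}^m that are δ-almost k-wise indistinguishable (the marginals on any k coordinates have total variation distance at most δ), with m^k δ < 1. Then there exist distributions D₁', D₂' on {0,1}^m that are exactly k-wise indistinguishable, with ‖D₁ − D₁'‖₁ ≤ 2 m^k δ and ‖D₂ − D₂'‖₁ ≤ 2 m^k δ, and moreover ‖D₁'‖_∞ ≤ ‖D₁‖_∞ + 2 m^k δ · 2^{-m}; in particular, if D₁ has min-entropy at least m − r then D₁' has min-entropy at least m − O(r). -/
import Mathlib


open Classical Finset

/-- `D` is a probability distribution on `{0,1}^m`. -/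
def IsDist (m : ℕ) (D : (Fin m → Bool) → ℝ) : Prop :=
  (∀ x, 0 ≤ D x) ∧ ∑ x, D x = 1

/-- Total variation distance between the marginals of `D₁` and `D₂` on the
coordinate set `T`. -/
noncomputable def margTV (m : ℕ) (D₁ D₂ : (Fin m → Bool) → ℝ)
    (T : Finset (Fin m)) : ℝ :=
  (1 / 2) * ∑ σ : ({i : Fin m // i ∈ T} → Bool),
    |∑ x ∈ Finset.univ.filter
        (fun x : Fin m → Bool => ∀ i : {i : Fin m // i ∈ T}, x i.1 = σ i),
      (D₁ x - D₂ x)|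

/-- Total variation (statistical) distance between distributions on `{0,1}^m`. -/
noncomputable def TV (m : ℕ) (D₁ D₂ : (Fin m → Bool) → ℝ) : ℝ :=
  (1 / 2) * ∑ x, |D₁ x - D₂ x|


noncomputable section BIVWaux

namespace BIVWaux

variable {m k : ℕ}

/-- sign of a bit -/
def eps1 (b : Bool) : ℝ := if b then -1 else 1

lemma eps1_abs (b : Bool) : |eps1 b| = 1 := by cases b <;> simp [eps1]

lemma eps1_sq (b : Bool) : eps1 b * eps1 b = 1 := by cases b <;> simp [eps1]

lemma eps1_not (b : Bool) : eps1 (!b) = - eps1 b := by cases b <;> simp [eps1]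

/-- character -/
def chi (S : Finset (Fin m)) (x : Fin m → Bool) : ℝ := ∏ i ∈ S, eps1 (x i)

lemma chi_abs (S : Finset (Fin m)) (x : Fin m → Bool) : |chi S x| = 1 := by
  rw [chi, Finset.abs_prod]
  simp [eps1_abs]

lemma chi_update (S : Finset (Fin m)) (x : Fin m → Bool) {i₀ : Fin m} (h : i₀ ∈ S) :
    chi S (Function.update x i₀ (!x i₀)) = - chi S x := by
  rw [chi, chi, ← Finset.mul_prod_erase _ _ h, ← Finset.mul_prod_erase _ _ h]
  rw [Function.update_self, eps1_not, neg_mul]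
  congr 2
  · exact Finset.prod_congr rfl fun i hi => by
      rw [Function.update_of_ne (Finset.ne_of_mem_erase hi)]

lemma sum_chi {S : Finset (Fin m)} (hS : S.Nonempty) :
    ∑ x : Fin m → Bool, chi S x = 0 := by
  obtain ⟨i₀, hi₀⟩ := hS
  have hinv : Function.Involutive (fun x : Fin m → Bool => Function.update x i₀ (!x i₀)) := by
    intro x
    funext j
    by_cases hj : j = i₀
    · subst hj; simp
    · simp [Function.update_of_ne hj]
  have h1 : ∑ x : Fin m → Bool, chi S (Function.update x i₀ (!x i₀))
      = ∑ x : Fin m → Bool, chi S x := by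
    have := Equiv.sum_comp hinv.toPerm (chi S)
    simpa [Function.Involutive.coe_toPerm] using this
  have h2 : ∑ x : Fin m → Bool, chi S (Function.update x i₀ (!x i₀))
      = - ∑ x : Fin m → Bool, chi S x := by
    simp only [fun x => chi_update S x hi₀, Finset.sum_neg_distrib]
  linarith

lemma chi_empty (x : Fin m → Bool) : chi (∅ : Finset (Fin m)) x = 1 := by simp [chi]

lemma card_cube : Fintype.card (Fin m → Bool) = 2 ^ m := by
  simp [Fintype.card_fun]

lemma sum_chi_mul (S T : Finset (Fin m)) :
    ∑ x : Fin m → Bool, chi S x * chi T x =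
      if S = T then (2 : ℝ) ^ m else 0 := by
  have key : ∀ x : Fin m → Bool, chi S x * chi T x = chi ((S \ T) ∪ (T \ S)) x := by
    intro x
    have hS : chi S x = chi (S \ T) x * chi (S ∩ T) x := by
      rw [chi, chi, chi, ← Finset.prod_union (Finset.disjoint_sdiff_inter S T)]
      congr 1
      rw [Finset.sdiff_union_inter]
    have hT : chi T x = chi (T \ S) x * chi (S ∩ T) x := by
      rw [chi, chi, chi, Finset.inter_comm,
        ← Finset.prod_union (Finset.disjoint_sdiff_inter T S)]
      congr 1
      rw [Finset.sdiff_union_inter]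
    have hsq : chi (S ∩ T) x * chi (S ∩ T) x = 1 := by
      rw [chi, ← Finset.prod_mul_distrib]
      exact Finset.prod_eq_one fun i _ => eps1_sq _
    have hun : chi ((S \ T) ∪ (T \ S)) x = chi (S \ T) x * chi (T \ S) x := by
      rw [chi, chi, chi, ← Finset.prod_union (disjoint_sdiff_sdiff)]
    rw [hS, hT, hun]
    calc chi (S \ T) x * chi (S ∩ T) x * (chi (T \ S) x * chi (S ∩ T) x)
        = chi (S \ T) x * chi (T \ S) x * (chi (S ∩ T) x * chi (S ∩ T) x) := by ring
      _ = chi (S \ T) x * chi (T \ S) x := by rw [hsq, mul_one]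
  simp only [key]
  by_cases h : S = T
  · subst h
    simp only [Finset.sdiff_self, Finset.empty_union, chi_empty, if_true]
    rw [Finset.sum_const, card_univ, card_cube]
    simp
  · rw [if_neg h]
    apply sum_chi
    rw [Finset.nonempty_iff_ne_empty]
    intro hemp
    have h1 : S \ T = ∅ := Finset.union_eq_empty.mp hemp |>.1
    have h2 : T \ S = ∅ := Finset.union_eq_empty.mp hemp |>.2
    exact h (Finset.Subset.antisymm (Finset.sdiff_eq_empty_iff_subset.mp h1)
      (Finset.sdiff_eq_empty_iff_subset.mp h2))

/-- fiber of the restriction map -/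
def fiber (T : Finset (Fin m)) (σ : {i : Fin m // i ∈ T} → Bool) :
    Finset (Fin m → Bool) :=
  Finset.univ.filter
    (fun x : Fin m → Bool => ∀ i : {i : Fin m // i ∈ T}, x i.1 = σ i)

/-- extension of a partial assignment by `false` -/
def extσ (T : Finset (Fin m)) (σ : {i : Fin m // i ∈ T} → Bool) : Fin m → Bool :=
  fun i => if h : i ∈ T then σ ⟨i, h⟩ else false

lemma mem_fiber_iff {T : Finset (Fin m)} {σ : {i : Fin m // i ∈ T} → Bool}
    {x : Fin m → Bool} : x ∈ fiber T σ ↔ ∀ i ∈ T, x i = extσ T σ i := by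
  simp only [fiber, Finset.mem_filter, Finset.mem_univ, true_and]
  constructor
  · intro h i hi
    rw [extσ, dif_pos hi]
    exact h ⟨i, hi⟩
  · intro h i
    have := h i.1 i.2
    rwa [extσ, dif_pos i.2] at this

lemma sum_powerset_chi (T : Finset (Fin m)) (y e : Fin m → Bool) :
    ∑ S ∈ T.powerset, chi S y * chi S e = ∏ i ∈ T, (eps1 (y i) * eps1 (e i) + 1) := by
  rw [Finset.prod_add]
  apply Finset.sum_congr rfl
  intro S _
  rw [Finset.prod_const_one, mul_one, chi, chi, ← Finset.prod_mul_distrib]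

lemma prod_factor (T : Finset (Fin m)) (y e : Fin m → Bool) :
    ∏ i ∈ T, (eps1 (y i) * eps1 (e i) + 1) =
      if ∀ i ∈ T, y i = e i then (2 : ℝ) ^ T.card else 0 := by
  by_cases h : ∀ i ∈ T, y i = e i
  · rw [if_pos h]
    have h2 : ∀ i ∈ T, eps1 (y i) * eps1 (e i) + 1 = 2 := fun i hi => by
      rw [h i hi, eps1_sq]; norm_num
    rw [Finset.prod_congr rfl h2, Finset.prod_const]
  · rw [if_neg h]
    push_neg at h
    obtain ⟨i, hi, hne⟩ := h
    apply Finset.prod_eq_zero hi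
    cases hy : y i <;> cases he : e i <;> simp_all [eps1]

lemma fourier_fiber (f : (Fin m → Bool) → ℝ) (T : Finset (Fin m))
    (σ : {i : Fin m // i ∈ T} → Bool) :
    ∑ S ∈ T.powerset, (∑ y, f y * chi S y) * chi S (extσ T σ)
      = (2 : ℝ) ^ T.card * ∑ x ∈ fiber T σ, f x := by
  calc
    ∑ S ∈ T.powerset, (∑ y, f y * chi S y) * chi S (extσ T σ)
      = ∑ S ∈ T.powerset, ∑ y, f y * (chi S y * chi S (extσ T σ)) := by
        simp_rw [Finset.sum_mul, mul_assoc]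
    _ = ∑ y, ∑ S ∈ T.powerset, f y * (chi S y * chi S (extσ T σ)) := Finset.sum_comm
    _ = ∑ y, f y * ∑ S ∈ T.powerset, chi S y * chi S (extσ T σ) := by
        simp_rw [Finset.mul_sum]
    _ = ∑ y : Fin m → Bool,
          f y * (if ∀ i ∈ T, y i = extσ T σ i then (2 : ℝ) ^ T.card else 0) := by
        simp_rw [sum_powerset_chi, prod_factor]
    _ = ∑ y ∈ Finset.univ.filter (fun y : Fin m → Bool => ∀ i ∈ T, y i = extσ T σ i),
          f y * (2 : ℝ) ^ T.card := by
        rw [Finset.sum_filter]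
        apply Finset.sum_congr rfl
        intro y _
        by_cases h : ∀ i ∈ T, y i = extσ T σ i <;> simp [h]
    _ = (2 : ℝ) ^ T.card * ∑ x ∈ fiber T σ, f x := by
        rw [← Finset.sum_mul, mul_comm]
        congr 1
        apply Finset.sum_congr _ (fun _ _ => rfl)
        ext x
        simp only [Finset.mem_filter, Finset.mem_univ, true_and, mem_fiber_iff]

lemma fiber_eq_filter (T : Finset (Fin m)) (σ : {i : Fin m // i ∈ T} → Bool) :
    fiber T σ = Finset.univ.filter
      (fun x : Fin m → Bool => (fun i : {i : Fin m // i ∈ T} => x i.1) = σ) := by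
  apply Finset.filter_congr
  intro x _
  simp [funext_iff]

lemma sum_fiber (f : (Fin m → Bool) → ℝ) (T : Finset (Fin m)) :
    ∑ σ : {i : Fin m // i ∈ T} → Bool, ∑ x ∈ fiber T σ, f x = ∑ x, f x := by
  simp_rw [fiber_eq_filter]
  exact Finset.sum_fiberwise _ _ _

lemma chi_const_on_fiber {T : Finset (Fin m)} {σ : {i : Fin m // i ∈ T} → Bool}
    {S : Finset (Fin m)} (hS : S ⊆ T) {x : Fin m → Bool} (hx : x ∈ fiber T σ) :
    chi S x = chi S (extσ T σ) := by
  apply Finset.prod_congr rfl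
  intro i hi
  rw [mem_fiber_iff.mp hx i (hS hi)]

/-- the collection of nonempty coordinate sets of size at most `k` -/
def lowSets (m k : ℕ) : Finset (Finset (Fin m)) :=
  Finset.univ.filter (fun S => S.Nonempty ∧ S.card ≤ k)

lemma card_lowSets_le : (lowSets m k).card ≤ m ^ k := by
  rcases Finset.eq_empty_or_nonempty (lowSets m k) with h | h
  · simp [h]
  · obtain ⟨S₀, hS₀⟩ := h
    have hS₀' := (Finset.mem_filter.mp hS₀).2
    obtain ⟨i₀, _⟩ := hS₀'.1
    have hm : 0 < m := i₀.pos
    set f : Finset (Fin m) → (Fin k → Fin m) := fun S i =>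
      (S.sort (· ≤ ·)).getD i (if h : S.Nonempty then S.min' h else ⟨0, hm⟩) with hf
    have key : ∀ S ∈ lowSets m k, S = Finset.image (f S) Finset.univ := by
      intro S hS
      obtain ⟨hne, hcard⟩ := (Finset.mem_filter.mp hS).2
      ext a
      simp only [Finset.mem_image, Finset.mem_univ, true_and]
      constructor
      · intro ha
        have ha' : a ∈ S.sort (· ≤ ·) := (Finset.mem_sort _).mpr ha
        obtain ⟨j, hj, hja⟩ := List.getElem_of_mem ha'
        have hjk : j < k := lt_of_lt_of_le (by rwa [Finset.length_sort] at hj) hcard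
        refine ⟨⟨j, hjk⟩, ?_⟩
        show (S.sort (· ≤ ·)).getD j _ = a
        rw [List.getD_eq_getElem _ _ hj]
        exact hja
      · rintro ⟨i, rfl⟩
        show (S.sort (· ≤ ·)).getD i _ ∈ S
        by_cases hi : (i : ℕ) < (S.sort (· ≤ ·)).length
        · rw [List.getD_eq_getElem _ _ hi]
          exact (Finset.mem_sort _).mp (List.getElem_mem _)
        · rw [List.getD_eq_default _ _ (le_of_not_gt hi), dif_pos hne]
          exact S.min'_mem hne
    have hinj : Set.InjOn f (lowSets m k) := by
      intro S hS S' hS' heq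
      rw [key S hS, key S' hS', heq]
    have := Finset.card_le_card_of_injOn f (fun _ _ => Finset.mem_univ _) hinj
    rwa [Finset.card_univ, Fintype.card_fun, Fintype.card_fin, Fintype.card_fin] at this

lemma margTV_eq (D₁ D₂ : (Fin m → Bool) → ℝ) (T : Finset (Fin m)) :
    margTV m D₁ D₂ T = (1 / 2) * ∑ σ : ({i : Fin m // i ∈ T} → Bool),
      |∑ x ∈ fiber T σ, (D₁ x - D₂ x)| := rfl

lemma abs_sum_mul_chi_le (D₁ D₂ : (Fin m → Bool) → ℝ) (S : Finset (Fin m)) :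
    |∑ y, (D₁ y - D₂ y) * chi S y| ≤ 2 * margTV m D₁ D₂ S := by
  have h1 : ∑ y, (D₁ y - D₂ y) * chi S y
      = ∑ σ : {i : Fin m // i ∈ S} → Bool,
          chi S (extσ S σ) * ∑ x ∈ fiber S σ, (D₁ x - D₂ x) := by
    rw [← sum_fiber (fun y => (D₁ y - D₂ y) * chi S y) S]
    apply Finset.sum_congr rfl
    intro σ _
    rw [Finset.mul_sum]
    apply Finset.sum_congr rfl
    intro x hx
    rw [chi_const_on_fiber (Finset.Subset.refl S) hx]
    ring
  rw [h1, margTV_eq]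
  calc |∑ σ : {i : Fin m // i ∈ S} → Bool,
          chi S (extσ S σ) * ∑ x ∈ fiber S σ, (D₁ x - D₂ x)|
      ≤ ∑ σ : {i : Fin m // i ∈ S} → Bool,
          |chi S (extσ S σ) * ∑ x ∈ fiber S σ, (D₁ x - D₂ x)| :=
        Finset.abs_sum_le_sum_abs _ _
    _ = ∑ σ : {i : Fin m // i ∈ S} → Bool, |∑ x ∈ fiber S σ, (D₁ x - D₂ x)| := by
        simp_rw [abs_mul, chi_abs, one_mul]
    _ = 2 * ((1 / 2) * ∑ σ : {i : Fin m // i ∈ S} → Bool,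
          |∑ x ∈ fiber S σ, (D₁ x - D₂ x)|) := by ring

end BIVWaux

end BIVWaux

/-- **BIVW correction lemma with pointwise-mass guarantee.**
Let `D₁, D₂` be distributions on `{0,1}^m` that are `δ`-almost `k`-wise
indistinguishable, with `m^k δ < 1`. Then there exist distributions `D₁', D₂'`
that are exactly `k`-wise indistinguishable, with `‖D₁ − D₁'‖₁ ≤ 2 m^k δ` and
`‖D₂ − D₂'‖₁ ≤ 2 m^k δ`, and moreover `‖D₁'‖_∞ ≤ ‖D₁‖_∞ + 2 m^k δ · 2^{-m}`;
in particular, if `D₁` has min-entropy at least `m − r` then `D₁'` has min-entropy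
at least `m − O(r)`. -/
theorem stmt19 (m k r : ℕ) (δ : ℝ) (hδ : 0 ≤ δ)
    (D₁ D₂ : (Fin m → Bool) → ℝ) (h₁ : IsDist m D₁) (h₂ : IsDist m D₂)
    (hclose : ∀ T : Finset (Fin m), T.card ≤ k → margTV m D₁ D₂ T ≤ δ)
    (hsmall : (m : ℝ) ^ k * δ < 1) :
    ∃ D₁' D₂' : (Fin m → Bool) → ℝ, IsDist m D₁' ∧ IsDist m D₂' ∧
      (∀ T : Finset (Fin m), T.card ≤ k → margTV m D₁' D₂' T = 0) ∧
      TV m D₁ D₁' ≤ 2 * (m : ℝ) ^ k * δ ∧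
      TV m D₂ D₂' ≤ 2 * (m : ℝ) ^ k * δ ∧
      (∀ x, D₁' x ≤ (⨆ y, D₁ y) + 2 * (m : ℝ) ^ k * δ * (2 : ℝ) ^ (-(m : ℤ))) ∧
      ((∀ x, D₁ x ≤ (2 : ℝ) ^ ((r : ℤ) - (m : ℤ))) →
        ∀ x, D₁' x ≤ (2 : ℝ) ^ ((r : ℤ) + 2 - (m : ℤ))) := by
  classical
  obtain ⟨h₁0, h₁1⟩ := h₁
  obtain ⟨h₂0, h₂1⟩ := h₂
  set s : ℝ := (m : ℝ) ^ k * δ with hs_def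
  have hs0 : 0 ≤ s := mul_nonneg (pow_nonneg (Nat.cast_nonneg m) k) hδ
  have hP : (0 : ℝ) < 2 ^ m := by positivity
  set η : ℝ := s / 2 ^ m with hη_def
  have hη0 : 0 ≤ η := div_nonneg hs0 hP.le
  set c : Finset (Fin m) → ℝ :=
    fun S => (∑ y, (D₁ y - D₂ y) * BIVWaux.chi S y) / 2 ^ m with hc
  set Dlow : (Fin m → Bool) → ℝ :=
    fun x => ∑ S ∈ BIVWaux.lowSets m k, c S * BIVWaux.chi S x with hDlow
  have hcS : ∀ S ∈ BIVWaux.lowSets m k, |c S| ≤ 2 * δ / 2 ^ m := by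
    intro S hS
    obtain ⟨_, hcard⟩ := (Finset.mem_filter.mp hS).2
    have h := BIVWaux.abs_sum_mul_chi_le D₁ D₂ S
    have h2 := hclose S hcard
    simp only [hc]
    rw [abs_div, abs_of_pos hP]
    gcongr
    linarith
  have hDlow_abs : ∀ x, |Dlow x| ≤ 2 * η := by
    intro x
    have hcastcard : ((BIVWaux.lowSets m k).card : ℝ) ≤ (m : ℝ) ^ k := by
      have := BIVWaux.card_lowSets_le (m := m) (k := k)
      exact_mod_cast this
    calc |Dlow x| ≤ ∑ S ∈ BIVWaux.lowSets m k, |c S * BIVWaux.chi S x| :=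
          Finset.abs_sum_le_sum_abs _ _
      _ = ∑ S ∈ BIVWaux.lowSets m k, |c S| := by
          simp_rw [abs_mul, BIVWaux.chi_abs, mul_one]
      _ ≤ ∑ _S ∈ BIVWaux.lowSets m k, (2 * δ / 2 ^ m) := Finset.sum_le_sum hcS
      _ = ((BIVWaux.lowSets m k).card : ℝ) * (2 * δ / 2 ^ m) := by
          rw [Finset.sum_const, nsmul_eq_mul]
      _ ≤ (m : ℝ) ^ k * (2 * δ / 2 ^ m) := by
          apply mul_le_mul_of_nonneg_right hcastcard
          positivity
      _ = 2 * η := by rw [hη_def, hs_def]; ring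
  have hden : (0 : ℝ) < 1 + s := by linarith
  set E₁ : (Fin m → Bool) → ℝ := fun x => (D₁ x - Dlow x / 2 + η) / (1 + s) with hE₁
  set E₂ : (Fin m → Bool) → ℝ := fun x => (D₂ x + Dlow x / 2 + η) / (1 + s) with hE₂
  have hDlowsum : ∑ x, Dlow x = 0 := by
    simp only [hDlow]
    rw [Finset.sum_comm]
    apply Finset.sum_eq_zero
    intro S hS
    rw [← Finset.mul_sum, BIVWaux.sum_chi (Finset.mem_filter.mp hS).2.1, mul_zero]
  have hΔsum : ∑ x, (D₁ x - D₂ x) = 0 := by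
    rw [Finset.sum_sub_distrib, h₁1, h₂1, sub_self]
  have hcard2m : ∑ _x : Fin m → Bool, (1 : ℝ) = 2 ^ m := by
    rw [Finset.sum_const, Finset.card_univ, BIVWaux.card_cube]
    simp
  have hηP : (2 : ℝ) ^ m * η = s := by
    rw [hη_def, mul_div_cancel₀ _ hP.ne']
  have hE₁sum : ∑ x, E₁ x = 1 := by
    simp only [hE₁]
    rw [← Finset.sum_div]
    have : ∑ x, (D₁ x - Dlow x / 2 + η) = 1 + s := by
      rw [show (fun x => D₁ x - Dlow x / 2 + η) = fun x => (D₁ x - Dlow x / 2) + η * 1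
        from funext fun x => by ring]
      rw [Finset.sum_add_distrib, Finset.sum_sub_distrib, ← Finset.mul_sum, hcard2m,
        h₁1]
      rw [show ∑ x, Dlow x / 2 = (∑ x, Dlow x) / 2 from (Finset.sum_div _ _ _).symm]
      rw [hDlowsum]
      rw [mul_comm η, hηP]
      ring
    rw [this, div_self hden.ne']
  have hE₂sum : ∑ x, E₂ x = 1 := by
    simp only [hE₂]
    rw [← Finset.sum_div]
    have : ∑ x, (D₂ x + Dlow x / 2 + η) = 1 + s := by
      rw [show (fun x => D₂ x + Dlow x / 2 + η) = fun x => (D₂ x + Dlow x / 2) + η * 1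
        from funext fun x => by ring]
      rw [Finset.sum_add_distrib, Finset.sum_add_distrib, ← Finset.mul_sum, hcard2m,
        h₂1]
      rw [show ∑ x, Dlow x / 2 = (∑ x, Dlow x) / 2 from (Finset.sum_div _ _ _).symm]
      rw [hDlowsum]
      rw [mul_comm η, hηP]
      ring
    rw [this, div_self hden.ne']
  have hE₁0 : ∀ x, 0 ≤ E₁ x := by
    intro x
    have h2 := abs_le.mp (hDlow_abs x)
    apply div_nonneg _ hden.le
    have := h₁0 x
    linarith
  have hE₂0 : ∀ x, 0 ≤ E₂ x := by
    intro x
    have h2 := abs_le.mp (hDlow_abs x)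
    apply div_nonneg _ hden.le
    have := h₂0 x
    linarith
  have hDlowchi : ∀ S : Finset (Fin m),
      ∑ y, Dlow y * BIVWaux.chi S y =
        if S ∈ BIVWaux.lowSets m k then c S * 2 ^ m else 0 := by
    intro S
    simp only [hDlow]
    simp_rw [Finset.sum_mul, mul_assoc]
    rw [Finset.sum_comm]
    have : ∀ S' ∈ BIVWaux.lowSets m k,
        ∑ y, c S' * (BIVWaux.chi S' y * BIVWaux.chi S y)
          = if S' = S then c S' * 2 ^ m else 0 := by
      intro S' _
      rw [← Finset.mul_sum, BIVWaux.sum_chi_mul]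
      by_cases h : S' = S <;> simp [h]
    rw [Finset.sum_congr rfl this, Finset.sum_ite_eq' (BIVWaux.lowSets m k)]
  have hmarg : ∀ T : Finset (Fin m), T.card ≤ k →
      ∀ σ : {i : Fin m // i ∈ T} → Bool,
        ∑ x ∈ BIVWaux.fiber T σ, (D₁ x - D₂ x - Dlow x) = 0 := by
    intro T hT σ
    have hcoeff : ∀ S ∈ T.powerset,
        (∑ y, (D₁ y - D₂ y - Dlow y) * BIVWaux.chi S y) = 0 := by
      intro S hSp
      have hsub := Finset.mem_powerset.mp hSp
      have hcd : S.card ≤ k := le_trans (Finset.card_le_card hsub) hT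
      have hsplit : ∀ y, (D₁ y - D₂ y - Dlow y) * BIVWaux.chi S y
          = (D₁ y - D₂ y) * BIVWaux.chi S y - Dlow y * BIVWaux.chi S y := fun y => by ring
      rw [Finset.sum_congr rfl fun y _ => hsplit y, Finset.sum_sub_distrib, hDlowchi S]
      by_cases hne : S.Nonempty
      · have hmem : S ∈ BIVWaux.lowSets m k := by
          simp [BIVWaux.lowSets, hne, hcd]
        rw [if_pos hmem]
        simp only [hc]
        rw [div_mul_cancel₀ _ hP.ne', sub_self]
      · have hSe : S = ∅ := Finset.not_nonempty_iff_eq_empty.mp hne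
        subst hSe
        have : (∅ : Finset (Fin m)) ∉ BIVWaux.lowSets m k := by
          simp [BIVWaux.lowSets]
        rw [if_neg this]
        simp only [BIVWaux.chi_empty, mul_one]
        rw [hΔsum]
        ring
    have hff := BIVWaux.fourier_fiber (fun x => D₁ x - D₂ x - Dlow x) T σ
    rw [Finset.sum_eq_zero (fun S hS => by rw [hcoeff S hS, zero_mul])] at hff
    have h2T : (0 : ℝ) < 2 ^ T.card := by positivity
    exact (mul_eq_zero.mp hff.symm).resolve_left h2T.ne' 
  have hE₁diff : ∀ x, E₁ x - E₂ x = (D₁ x - D₂ x - Dlow x) / (1 + s) := by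
    intro x
    simp only [hE₁, hE₂]
    field_simp
    ring
  refine ⟨E₁, E₂, ⟨hE₁0, hE₁sum⟩, ⟨hE₂0, hE₂sum⟩, ?_, ?_, ?_, ?_, ?_⟩
  · intro T hT
    rw [BIVWaux.margTV_eq]
    have hz : ∀ σ : {i : Fin m // i ∈ T} → Bool,
        |∑ x ∈ BIVWaux.fiber T σ, (E₁ x - E₂ x)| = 0 := by
      intro σ
      simp_rw [hE₁diff]
      rw [← Finset.sum_div, hmarg T hT σ, zero_div, abs_zero]
    rw [Finset.sum_congr rfl (fun σ _ => hz σ)]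
    simp
  · -- TV D₁ E₁
    rw [TV]
    have hpt : ∀ x, |D₁ x - E₁ x| ≤ s * D₁ x + 2 * η := by
      intro x
      have hx : D₁ x - E₁ x = (s * D₁ x + Dlow x / 2 - η) / (1 + s) := by
        simp only [hE₁]
        field_simp
        ring
      rw [hx, abs_div, abs_of_pos hden]
      have h2 := abs_le.mp (hDlow_abs x)
      have h3 : 0 ≤ s * D₁ x := mul_nonneg hs0 (h₁0 x)
      have h1 : |s * D₁ x + Dlow x / 2 - η| ≤ s * D₁ x + 2 * η := by
        rw [abs_le]
        constructor <;> linarith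
      calc |s * D₁ x + Dlow x / 2 - η| / (1 + s)
          ≤ |s * D₁ x + Dlow x / 2 - η| :=
            div_le_self (abs_nonneg _) (by linarith)
        _ ≤ s * D₁ x + 2 * η := h1
    calc (1 / 2 : ℝ) * ∑ x, |D₁ x - E₁ x|
        ≤ (1 / 2 : ℝ) * ∑ x, (s * D₁ x + 2 * η) := by
          apply mul_le_mul_of_nonneg_left (Finset.sum_le_sum fun x _ => hpt x)
          norm_num
      _ = (1 / 2 : ℝ) * (s + 2 * s) := by
          rw [Finset.sum_add_distrib, ← Finset.mul_sum, h₁1,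
            show ∑ _x : Fin m → Bool, 2 * η = 2 ^ m * (2 * η) from by
              rw [Finset.sum_const, Finset.card_univ, BIVWaux.card_cube]; ring]
          rw [show (2:ℝ)^m * (2*η) = 2 * (2^m * η) from by ring, hηP]
          ring
      _ ≤ 2 * (m : ℝ) ^ k * δ := by rw [hs_def] at *; nlinarith [hs0]
  · -- TV D₂ E₂
    rw [TV]
    have hpt : ∀ x, |D₂ x - E₂ x| ≤ s * D₂ x + 2 * η := by
      intro x
      have hx : D₂ x - E₂ x = (s * D₂ x - Dlow x / 2 - η) / (1 + s) := by
        simp only [hE₂]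
        field_simp
        ring
      rw [hx, abs_div, abs_of_pos hden]
      have h2 := abs_le.mp (hDlow_abs x)
      have h3 : 0 ≤ s * D₂ x := mul_nonneg hs0 (h₂0 x)
      have h1 : |s * D₂ x - Dlow x / 2 - η| ≤ s * D₂ x + 2 * η := by
        rw [abs_le]
        constructor <;> linarith
      calc |s * D₂ x - Dlow x / 2 - η| / (1 + s)
          ≤ |s * D₂ x - Dlow x / 2 - η| :=
            div_le_self (abs_nonneg _) (by linarith)
        _ ≤ s * D₂ x + 2 * η := h1
    calc (1 / 2 : ℝ) * ∑ x, |D₂ x - E₂ x|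
        ≤ (1 / 2 : ℝ) * ∑ x, (s * D₂ x + 2 * η) := by
          apply mul_le_mul_of_nonneg_left (Finset.sum_le_sum fun x _ => hpt x)
          norm_num
      _ = (1 / 2 : ℝ) * (s + 2 * s) := by
          rw [Finset.sum_add_distrib, ← Finset.mul_sum, h₂1,
            show ∑ _x : Fin m → Bool, 2 * η = 2 ^ m * (2 * η) from by
              rw [Finset.sum_const, Finset.card_univ, BIVWaux.card_cube]; ring]
          rw [show (2:ℝ)^m * (2*η) = 2 * (2^m * η) from by ring, hηP]
          ring
      _ ≤ 2 * (m : ℝ) ^ k * δ := by rw [hs_def] at *; nlinarith [hs0]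
  · -- pointwise sup
    intro x
    have h2 := abs_le.mp (hDlow_abs x)
    have hnum : E₁ x ≤ D₁ x + 2 * η := by
      simp only [hE₁]
      have hd : (D₁ x - Dlow x / 2 + η) / (1 + s) ≤ D₁ x - Dlow x / 2 + η := by
        apply div_le_self _ (by linarith)
        have := h₁0 x
        linarith
      linarith
    have hsup : D₁ x ≤ ⨆ y, D₁ y :=
      le_ciSup (Set.Finite.bddAbove (Set.finite_range D₁)) x
    have hηeq : 2 * η = 2 * (m : ℝ) ^ k * δ * (2 : ℝ) ^ (-(m : ℤ)) := by
      rw [hη_def, hs_def, zpow_neg, zpow_natCast, div_eq_mul_inv]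
      ring
    linarith
  · -- min entropy
    intro hbound x
    have h2 := abs_le.mp (hDlow_abs x)
    have hnum : E₁ x ≤ D₁ x + 2 * η := by
      simp only [hE₁]
      have hd : (D₁ x - Dlow x / 2 + η) / (1 + s) ≤ D₁ x - Dlow x / 2 + η := by
        apply div_le_self _ (by linarith)
        have := h₁0 x
        linarith
      linarith
    have hmono : (2 : ℝ) ^ (-(m : ℤ)) ≤ (2 : ℝ) ^ ((r : ℤ) - (m : ℤ)) := by
      apply zpow_le_zpow_right₀ one_le_two
      omega
    have hη1 : η ≤ (2 : ℝ) ^ (-(m : ℤ)) := by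
      rw [hη_def, zpow_neg, zpow_natCast]
      rw [div_eq_mul_inv]
      have hinv : (0:ℝ) ≤ ((2:ℝ)^m)⁻¹ := by positivity
      nlinarith [hsmall.le]
    have hsplit : (2 : ℝ) ^ ((r : ℤ) + 2 - (m : ℤ)) = 4 * (2 : ℝ) ^ ((r : ℤ) - (m : ℤ)) := by
      rw [show (r : ℤ) + 2 - (m : ℤ) = 2 + ((r : ℤ) - (m : ℤ)) from by ring,
        zpow_add₀ (by norm_num : (2:ℝ) ≠ 0)]
      norm_num
    have hpos : (0 : ℝ) < (2 : ℝ) ^ ((r : ℤ) - (m : ℤ)) := by positivity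
    have := hbound x
    rw [hsplit]
    linarith
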